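/- If X has the density P_X(x) = (a/(π x)) sinc²(a ln x) with 0 < a < π/ln 10, then X satisfies the strong Benford law in base 10, and in particular the leading decimal digit d₀ of X satisfies P(d₀ = d) = log₁₀(1 + 1/d) for each d ∈ {1,…,9}. -/

import Mathlib

open MeasureTheory Set Filter
open Real hiding sinc sinc_zero sinc_neg abs_sinc_le_one continuous_sinc
open scoped FourierTransform

noncomputable def sinc (x : ℝ) : ℝ := if x = 0 then 1 else Real.sin x / x

lemma sinc_zero : sinc 0 = 1 := by simp [sinc]

lemma sinc_of_ne (x : ℝ) (hx : x ≠ 0) : sinc x = Real.sin x / x := by simp [sinc, hx]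

lemma continuous_sinc : Continuous sinc := by
  rw [continuous_iff_continuousAt]
  intro x
  rcases eq_or_ne x 0 with rfl | hx
  · have h1 : Tendsto (slope Real.sin 0) (nhdsWithin 0 {(0:ℝ)}ᶜ) (nhds 1) := by
      have := Real.hasDerivAt_sin 0
      rw [Real.cos_zero] at this
      exact hasDerivAt_iff_tendsto_slope.mp this
    have h2 : Tendsto sinc (nhdsWithin 0 {(0:ℝ)}ᶜ) (nhds 1) := by
      refine h1.congr' ?_
      filter_upwards [self_mem_nhdsWithin] with y hy
      have hy' : y ≠ 0 := by simpa using hy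
      simp [slope, sinc, hy', Real.sin_zero, sub_zero]
      ring
    have : Tendsto sinc (nhds 0) (nhds 1) := by
      rw [← nhdsNE_sup_pure 0]
      refine Tendsto.sup h2 ?_
      simpa [sinc_zero] using tendsto_pure_nhds sinc 0
    simpa [ContinuousAt, sinc_zero] using this
  · have : ContinuousAt (fun y => Real.sin y / y) x :=
      (Real.continuous_sin.continuousAt).div continuousAt_id hx
    refine this.congr ?_
    filter_upwards [isOpen_compl_singleton.mem_nhds hx] with y hy
    simp [sinc, (by simpa using hy : y ≠ 0)]

lemma abs_sinc_le_one (x : ℝ) : |sinc x| ≤ 1 := by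
  rcases eq_or_ne x 0 with rfl | hx
  · simp [sinc_zero]
  · rw [sinc_of_ne x hx, abs_div]
    rw [div_le_one (abs_pos.mpr hx)]
    exact Real.abs_sin_le_abs

lemma sinc_sq_le_one (x : ℝ) : sinc x ^ 2 ≤ 1 := by
  have := abs_sinc_le_one x
  nlinarith [abs_nonneg (sinc x), sq_abs (sinc x)]

lemma sinc_sq_nonneg (x : ℝ) : 0 ≤ sinc x ^ 2 := sq_nonneg _

lemma sinc_sq_le_inv_sq (x : ℝ) (hx : x ≠ 0) : sinc x ^ 2 ≤ x⁻¹ ^ 2 := by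
  rw [sinc_of_ne x hx, div_pow, div_le_iff₀ (by positivity), inv_pow, inv_mul_cancel₀ (by positivity)]
  nlinarith [Real.neg_one_le_sin x, Real.sin_le_one x]

lemma sinc_sq_le_two_div (x : ℝ) : sinc x ^ 2 ≤ 2 / (1 + x ^ 2) := by
  rcases le_or_gt (|x|) 1 with h | h
  · have h1 : 1 + x ^ 2 ≤ 2 := by nlinarith [sq_abs x, abs_nonneg x]
    have h2 := sinc_sq_le_one x
    rw [le_div_iff₀ (by positivity)]
    nlinarith [sinc_sq_nonneg x, sq_nonneg x]
  · have hx : x ≠ 0 := by intro h0; rw [h0] at h; simp at h; linarith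
    have h1 := sinc_sq_le_inv_sq x hx
    have hx2 : (1:ℝ) ≤ x ^ 2 := by nlinarith [sq_abs x]
    have h3 : x⁻¹ ^ 2 ≤ 2 / (1 + x ^ 2) := by
      rw [inv_pow, le_div_iff₀ (by positivity), inv_mul_eq_div, div_le_iff₀ (by positivity)]
      nlinarith
    linarith

open Complex intervalIntegral

noncomputable def tri (r ξ : ℝ) : ℝ := max 0 (1 - |ξ|/r)
noncomputable def triC (r : ℝ) (ξ : ℝ) : ℂ := (tri r ξ : ℂ)
lemma tri_eq_zero {r ξ : ℝ} (hr : 0 < r) (h : r ≤ |ξ|) : tri r ξ = 0 := by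
  rw [tri, max_eq_left]; rw [sub_nonpos, le_div_iff₀ hr, one_mul]; exact h
lemma tri_eq {r ξ : ℝ} (hr : 0 < r) (h : |ξ| ≤ r) : tri r ξ = 1 - |ξ|/r := by
  rw [tri, max_eq_right]; rw [sub_nonneg, div_le_one hr]; exact h
lemma continuous_triC (r : ℝ) : Continuous (triC r) := by
  refine Complex.continuous_ofReal.comp ?_
  exact continuous_const.max (continuous_const.sub (continuous_abs.div_const r))

lemma inv_fourier_triC {r : ℝ} (hr : 0 < r) (x : ℝ) :
    𝓕⁻ (triC r) x = ((r * sinc (Real.pi * r * x) ^ 2 : ℝ) : ℂ) := by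
  have hπ := Real.pi_pos
  have hrC : (r:ℂ) ≠ 0 := Complex.ofReal_ne_zero.mpr hr.ne'
  rw [Real.fourierInv_eq']
  set c : ℂ := (2 * Real.pi * x : ℝ) * Complex.I with hc
  have hinteg : (fun v : ℝ => Complex.exp ((2 * Real.pi * (inner ℝ v x : ℝ) : ℝ) * Complex.I) • triC r v)
      = fun v : ℝ => Complex.exp (c * v) * triC r v := by
    funext v
    simp only [RCLike.inner_apply, starRingEnd_apply, star_trivial, smul_eq_mul, hc]
    norm_cast
    push_cast
    ring_nf
  rw [hinteg]
  clear_value c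
  have hg_cont : Continuous fun v : ℝ => Complex.exp (c * v) * triC r v := by
    exact (Complex.continuous_exp.comp (continuous_const.mul Complex.continuous_ofReal)).mul
      (continuous_triC r)
  have hsupp : ∀ v : ℝ, v ∉ Set.Icc (-r) r → Complex.exp (c * v) * triC r v = 0 := by
    intro v hv
    have : r ≤ |v| := by
      rw [Set.mem_Icc, not_and_or] at hv
      rcases hv with h | h
      · rw [abs_of_neg (by linarith [not_le.mp h])]; linarith [not_le.mp h]
      · rw [abs_of_pos (by linarith [not_le.mp h, hr])]; linarith [not_le.mp h]
    simp [triC, tri_eq_zero hr this]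
  have hres : ∫ v : ℝ, Complex.exp (c * v) * triC r v
      = ∫ v in Set.Icc (-r) r, Complex.exp (c * v) * triC r v := by
    symm
    exact setIntegral_eq_integral_of_ae_compl_eq_zero (.of_forall hsupp)
  rw [hres, MeasureTheory.integral_Icc_eq_integral_Ioc,
    ← intervalIntegral.integral_of_le (by linarith : -r ≤ r)]
  have hsplit : ∫ v in (-r)..r, Complex.exp (c * v) * triC r v
      = (∫ v in (-r)..(0:ℝ), Complex.exp (c * v) * triC r v)
        + ∫ v in (0:ℝ)..r, Complex.exp (c * v) * triC r v := by
    rw [intervalIntegral.integral_add_adjacent_intervals] <;>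
      exact hg_cont.intervalIntegrable _ _
  rw [hsplit]
  have hleft : ∫ v in (-r)..(0:ℝ), Complex.exp (c * v) * triC r v
      = ∫ v in (-r)..(0:ℝ), Complex.exp (c * v) * (1 + v / r) := by
    refine intervalIntegral.integral_congr fun v hv => ?_
    rw [Set.uIcc_of_le (by linarith : -r ≤ (0:ℝ))] at hv
    have h1 : |v| ≤ r := abs_le.mpr ⟨hv.1, by linarith [hv.2]⟩
    have h2 : |v| = -v := abs_of_nonpos hv.2
    rw [triC, tri_eq hr h1, h2]
    push_cast; ring_nf
  have hright : ∫ v in (0:ℝ)..r, Complex.exp (c * v) * triC r v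
      = ∫ v in (0:ℝ)..r, Complex.exp (c * v) * (1 - v / r) := by
    refine intervalIntegral.integral_congr fun v hv => ?_
    rw [Set.uIcc_of_le (by linarith : (0:ℝ) ≤ r)] at hv
    have h1 : |v| ≤ r := abs_le.mpr ⟨by linarith [hv.1], hv.2⟩
    have h2 : |v| = v := abs_of_nonneg hv.1
    rw [triC, tri_eq hr h1, h2]
    push_cast; ring_nf
  rw [hleft, hright]
  rcases eq_or_ne x 0 with rfl | hx
  · have hc0 : c = 0 := by rw [hc]; simp
    simp only [hc0, zero_mul, Complex.exp_zero, one_mul]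
    have e1 : ∫ v in (-r)..(0:ℝ), (1 + (v:ℂ) / r) = r / 2 := by
      rw [intervalIntegral.integral_add (intervalIntegrable_const)
        ((Complex.continuous_ofReal.div_const r).intervalIntegrable _ _)]
      simp only [intervalIntegral.integral_const, intervalIntegral.integral_div]
      have : ∫ v in (-r)..(0:ℝ), (v:ℂ) = -(r^2)/2 := by
        have h := intervalIntegral.integral_ofReal (μ := volume) (f := fun v : ℝ => v) (a := -r) (b := 0)
        rw [h, integral_id]
        push_cast; ring
      rw [this]
      push_cast; field_simp; rw [Complex.real_smul]; ring
    have e2 : ∫ v in (0:ℝ)..r, (1 - (v:ℂ) / r) = r / 2 := by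
      rw [intervalIntegral.integral_sub (intervalIntegrable_const)
        ((Complex.continuous_ofReal.div_const r).intervalIntegrable _ _)]
      simp only [intervalIntegral.integral_const, intervalIntegral.integral_div]
      have : ∫ v in (0:ℝ)..r, (v:ℂ) = (r^2)/2 := by
        have h := intervalIntegral.integral_ofReal (μ := volume) (f := fun v : ℝ => v) (a := 0) (b := r)
        rw [h, integral_id]
        push_cast; ring
      rw [this]
      push_cast; field_simp; rw [Complex.real_smul]; ring
    rw [e1, e2]
    rw [mul_zero, sinc_zero]
    push_cast; ring
  · have hcne : c ≠ 0 := by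
      rw [hc]
      intro h
      rcases mul_eq_zero.mp h with h | h
      · have h2 : (2 * Real.pi * x : ℝ) = 0 := Complex.ofReal_eq_zero.mp h
        have : (2 * Real.pi * x : ℝ) ≠ 0 := by positivity
        exact this h2
      · exact Complex.I_ne_zero h
    set F : ℝ → ℂ := fun ξ => (1 - ξ / r) * Complex.exp (c * ξ) / c + Complex.exp (c * ξ) / (c^2 * r) with hF
    set G : ℝ → ℂ := fun ξ => (1 + ξ / r) * Complex.exp (c * ξ) / c - Complex.exp (c * ξ) / (c^2 * r) with hG
    have hid : ∀ ξ : ℝ, HasDerivAt (fun ξ : ℝ => ((ξ:ℂ))) 1 ξ := fun ξ => (hasDerivAt_id ξ).ofReal_comp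
    have hexp : ∀ ξ : ℝ, HasDerivAt (fun ξ : ℝ => Complex.exp (c * ξ)) (c * Complex.exp (c * ξ)) ξ := by
      intro ξ
      have h2 := ((hid ξ).const_mul c).cexp
      simpa [mul_comm] using h2
    have hFd : ∀ ξ : ℝ, HasDerivAt F (Complex.exp (c * ξ) * (1 - ξ / r)) ξ := by
      intro ξ
      have h1 : HasDerivAt (fun ξ : ℝ => (1 - (ξ:ℂ) / r)) (-(1/r)) ξ := by
        exact ((hasDerivAt_const ξ (1:ℂ)).sub ((hid ξ).div_const r)).congr_deriv (by simp)
      have h2 := ((h1.mul (hexp ξ)).div_const c).add ((hexp ξ).div_const (c^2 * r))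
      refine h2.congr_deriv ?_
      field_simp
      ring
    have hGd : ∀ ξ : ℝ, HasDerivAt G (Complex.exp (c * ξ) * (1 + ξ / r)) ξ := by
      intro ξ
      have h1 : HasDerivAt (fun ξ : ℝ => (1 + (ξ:ℂ) / r)) (1/r) ξ := by
        exact ((hasDerivAt_const ξ (1:ℂ)).add ((hid ξ).div_const r)).congr_deriv (by simp)
      have h2 := ((h1.mul (hexp ξ)).div_const c).sub ((hexp ξ).div_const (c^2 * r))
      refine h2.congr_deriv ?_
      field_simp
      ring
    have hint1 : ∫ v in (-r)..(0:ℝ), Complex.exp (c * v) * (1 + v / r) = G 0 - G (-r) := by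
      refine intervalIntegral.integral_eq_sub_of_hasDerivAt (fun ξ _ => hGd ξ) ?_
      refine Continuous.intervalIntegrable ?_ _ _
      exact (Complex.continuous_exp.comp (continuous_const.mul Complex.continuous_ofReal)).mul
        (continuous_const.add (Complex.continuous_ofReal.div_const r))
    have hint2 : ∫ v in (0:ℝ)..r, Complex.exp (c * v) * (1 - v / r) = F r - F 0 := by
      refine intervalIntegral.integral_eq_sub_of_hasDerivAt (fun ξ _ => hFd ξ) ?_
      refine Continuous.intervalIntegrable ?_ _ _
      exact (Complex.continuous_exp.comp (continuous_const.mul Complex.continuous_ofReal)).mul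
        (continuous_const.sub (Complex.continuous_ofReal.div_const r))
    rw [hint1, hint2]
    have hG0 : G 0 = 1/c - 1/(c^2 * r) := by simp [hG]
    have hGr : G (-r) = -(Complex.exp (c * ((-r : ℝ) : ℂ)) / (c^2 * r)) := by
      simp only [hG]
      have h0 : (1 + ((-r : ℝ):ℂ)/r) = 0 := by
        push_cast
        field_simp
        norm_num
      rw [h0]
      ring
    have hFr : F r = Complex.exp (c * r)/(c^2 * r) := by
      simp only [hF]
      have h0 : (1 - ((r : ℝ):ℂ)/r) = 0 := by field_simp; norm_num
      rw [h0]
      ring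
    have hF0 : F 0 = 1/c + 1/(c^2 * r) := by simp [hF]
    have hval : G 0 - G (-r) + (F r - F 0)
        = (Complex.exp (c * r) + Complex.exp (c * ((-r : ℝ) : ℂ)) - 2) / (c^2 * r) := by
      rw [hG0, hGr, hFr, hF0]
      push_cast
      ring
    rw [hval]
    set θ : ℝ := 2 * Real.pi * x * r with hθ
    have hcr : c * (r:ℂ) = (θ:ℂ) * Complex.I := by rw [hc, hθ]; push_cast; ring
    have hcrn : c * ((-r : ℝ):ℂ) = -((θ:ℂ) * Complex.I) := by rw [hc, hθ]; push_cast; ring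
    have hsum : Complex.exp (c * r) + Complex.exp (c * ((-r : ℝ):ℂ)) = 2 * ((Real.cos θ : ℝ) : ℂ) := by
      rw [hcr, hcrn, Complex.ofReal_cos, Complex.cos]
      ring
    rw [hsum]
    have hs : Real.pi * r * x ≠ 0 := by
      have : Real.pi * r * x ≠ 0 ↔ ¬(Real.pi * r * x = 0) := Iff.rfl
      rw [this]
      intro h
      rcases mul_eq_zero.mp h with h1 | h1
      · rcases mul_eq_zero.mp h1 with h2 | h2
        · exact Real.pi_ne_zero h2
        · exact hr.ne' h2
      · exact hx h1
    have hc2 : c^2 = ((-((2 * Real.pi * x)^2) : ℝ) : ℂ) := by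
      rw [hc]
      push_cast
      rw [mul_pow, Complex.I_sq]
      ring
    have hcosθ : Real.cos θ = 1 - 2 * Real.sin (Real.pi * r * x) ^ 2 := by
      have h1 : θ = 2 * (Real.pi * r * x) := by rw [hθ]; ring
      rw [h1, Real.cos_two_mul', Real.cos_sq']
      ring
    rw [hcosθ, hc2]
    have : (2 * ((1 - 2 * Real.sin (Real.pi * r * x) ^ 2 : ℝ) : ℂ) - 2)
        = ((-(4 * Real.sin (Real.pi * r * x) ^ 2) : ℝ) : ℂ) := by
      push_cast; ring
    rw [this, ← Complex.ofReal_mul, ← Complex.ofReal_div, Complex.ofReal_inj]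
    rw [sinc_of_ne _ hs]
    field_simp
    ring


lemma hasCompactSupport_triC {r : ℝ} (hr : 0 < r) : HasCompactSupport (triC r) := by
  refine HasCompactSupport.intro (isCompact_Icc (a := -r) (b := r)) ?_
  intro ξ hξ
  have : r ≤ |ξ| := by
    rw [Set.mem_Icc, not_and_or] at hξ
    rcases hξ with h | h
    · rw [abs_of_neg (by linarith [not_le.mp h])]; linarith [not_le.mp h]
    · rw [abs_of_pos (by linarith [not_le.mp h, hr])]; linarith [not_le.mp h]
  simp [triC, tri_eq_zero hr this]

lemma integrable_triC {r : ℝ} (hr : 0 < r) : Integrable (triC r) :=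
  (continuous_triC r).integrable_of_hasCompactSupport (hasCompactSupport_triC hr)

noncomputable def fC (r : ℝ) : ℝ → ℂ := fun x => ((r * sinc (Real.pi * r * x) ^ 2 : ℝ) : ℂ)

lemma sinc_neg (x : ℝ) : sinc (-x) = sinc x := by
  rcases eq_or_ne x 0 with rfl | hx
  · simp
  · rw [sinc_of_ne _ (neg_ne_zero.mpr hx), sinc_of_ne _ hx, Real.sin_neg]
    field_simp

lemma continuous_fC (r : ℝ) : Continuous (fC r) := by
  refine Complex.continuous_ofReal.comp ?_
  exact continuous_const.mul ((continuous_sinc.comp (continuous_const.mul continuous_id)).pow 2)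

lemma integrable_fC {r : ℝ} (hr : 0 < r) : Integrable (fC r) := by
  have hπ := Real.pi_pos
  have hπr : Real.pi * r ≠ 0 := by positivity
  have hbase : Integrable fun x : ℝ => (1 + (Real.pi * r * x) ^ 2)⁻¹ := by
    have := integrable_inv_one_add_sq.comp_mul_left' (R := Real.pi * r) hπr
    simpa [mul_assoc] using this
  have hdom : Integrable fun x : ℝ => 2 * r * (1 + (Real.pi * r * x) ^ 2)⁻¹ := hbase.const_mul _
  refine hdom.mono ((continuous_fC r).aestronglyMeasurable) (.of_forall fun x => ?_)
  have h1 : ‖fC r x‖ = r * sinc (Real.pi * r * x) ^ 2 := by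
    rw [fC]
    rw [show ‖(((r * sinc (Real.pi * r * x) ^ 2 : ℝ)) : ℂ)‖ = |r * sinc (Real.pi * r * x) ^ 2| from (Complex.norm_real _).trans (Real.norm_eq_abs _)]
    exact abs_of_nonneg (by positivity)
  have h2 := sinc_sq_le_two_div (Real.pi * r * x)
  rw [h1, Real.norm_eq_abs, _root_.abs_of_nonneg (show (0:ℝ) ≤ 2 * r * (1 + (Real.pi * r * x) ^ 2)⁻¹ by positivity)]
  rw [div_eq_mul_inv] at h2
  calc r * sinc (Real.pi * r * x) ^ 2 ≤ r * (2 * (1 + (Real.pi * r * x) ^ 2)⁻¹) := by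
        exact mul_le_mul_of_nonneg_left h2 hr.le
    _ = 2 * r * (1 + (Real.pi * r * x) ^ 2)⁻¹ := by ring

lemma fourier_fC {r : ℝ} (hr : 0 < r) : 𝓕 (fC r) = triC r := by
  have hinv : 𝓕⁻ (triC r) = fC r := funext fun x => inv_fourier_triC hr x
  have h2 : 𝓕 (triC r) = fC r := by
    funext x
    have := Real.fourierInv_eq_fourier_neg (triC r) (-x)
    rw [neg_neg] at this
    rw [← this]
    rw [hinv]
    show fC r (-x) = fC r x
    simp only [fC]
    rw [show Real.pi * r * (-x) = -(Real.pi * r * x) by ring, sinc_neg]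
  rw [← hinv]
  exact Continuous.fourier_fourierInv_eq (continuous_triC r) (integrable_triC hr)
    (h2 ▸ integrable_fC hr)

lemma fC_isBigO {r : ℝ} (hr : 0 < r) :
    (fC r) =O[Filter.cocompact ℝ] (fun x : ℝ => |x| ^ (-2 : ℝ)) := by
  have hπ := Real.pi_pos
  rw [Asymptotics.isBigO_iff]
  refine ⟨r / (Real.pi * r) ^ 2, ?_⟩
  have hev : ∀ᶠ x : ℝ in Filter.cocompact ℝ, 1 ≤ |x| := by
    rw [cocompact_eq_atBot_atTop]
    rw [Filter.eventually_sup]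
    constructor
    · filter_upwards [Filter.eventually_le_atBot (-1 : ℝ)] with x hx
      rw [_root_.abs_of_nonpos (by linarith)]; linarith
    · filter_upwards [Filter.eventually_ge_atTop (1 : ℝ)] with x hx
      rw [_root_.abs_of_nonneg (by linarith)]; linarith
  filter_upwards [hev] with x hx
  have hx0 : x ≠ 0 := by intro h; rw [h] at hx; simp at hx; linarith
  have hrx : Real.pi * r * x ≠ 0 := by
    intro h
    rcases mul_eq_zero.mp h with h1 | h1
    · rcases mul_eq_zero.mp h1 with h2 | h2
      · exact Real.pi_ne_zero h2
      · exact hr.ne' h2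
    · exact hx0 h1
  have h1 : ‖fC r x‖ = r * sinc (Real.pi * r * x) ^ 2 := by
    rw [fC]
    rw [show ‖(((r * sinc (Real.pi * r * x) ^ 2 : ℝ)) : ℂ)‖ = |r * sinc (Real.pi * r * x) ^ 2| from (Complex.norm_real _).trans (Real.norm_eq_abs _)]
    exact abs_of_nonneg (by positivity)
  have h2 : |x| ^ (-2 : ℝ) = (x ^ 2)⁻¹ := by
    rw [show (-2 : ℝ) = -(2:ℕ) by norm_num, Real.rpow_neg (abs_nonneg x), Real.rpow_natCast, _root_.sq_abs]
  have h3 := sinc_sq_le_inv_sq (Real.pi * r * x) hrx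
  rw [h1, Real.norm_eq_abs, h2,
    _root_.abs_of_nonneg (show (0:ℝ) ≤ (x^2)⁻¹ by positivity)]
  calc r * sinc (Real.pi * r * x) ^ 2 ≤ r * ((Real.pi * r * x)⁻¹ ^ 2) :=
        mul_le_mul_of_nonneg_left h3 hr.le
    _ = r / (Real.pi * r) ^ 2 * (x ^ 2)⁻¹ := by
        rw [mul_inv, mul_pow, div_eq_mul_inv, ← inv_pow, ← inv_pow]
        ring

lemma hasSum_sinc_sq {B : ℝ} (hB : 0 < B) (hBπ : B < Real.pi) (t : ℝ) :
    HasSum (fun n : ℤ => sinc (t + B * n) ^ 2) (Real.pi / B) := by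
  have hπ := Real.pi_pos
  set r : ℝ := B / Real.pi with hrdef
  have hr : 0 < r := div_pos hB hπ
  have hr1 : r < 1 := (div_lt_one hπ).mpr hBπ
  have hπr : Real.pi * r = B := by rw [hrdef]; field_simp
  set x : ℝ := t / B with hxdef
  have hBx : ∀ n : ℤ, Real.pi * r * (x + n) = t + B * n := by
    intro n
    rw [hπr, hxdef]
    field_simp
  -- Poisson summation
  have hc : Continuous (fC r) := continuous_fC r
  have hFf : Summable fun n : ℤ => 𝓕 (fC r) n := by
    rw [fourier_fC hr]
    refine summable_of_ne_finset_zero (s := {0}) fun n hn => ?_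
    have hn0 : n ≠ 0 := by simpa using hn
    have : r ≤ |(n:ℝ)| := by
      have : (1:ℝ) ≤ |(n:ℝ)| := by
        rw [← Int.cast_abs]
        exact_mod_cast Int.one_le_abs (by simpa using hn0)
      linarith
    simp [triC, tri_eq_zero hr this]
  have hEq := Real.tsum_eq_tsum_fourier_of_rpow_decay_of_summable hc one_lt_two
    (by simpa using fC_isBigO hr) hFf x
  have hRHS : ∑' n : ℤ, 𝓕 (fC r) n * fourier n (x : UnitAddCircle) = 1 := by
    rw [fourier_fC hr]
    rw [tsum_eq_single 0 ?_]
    · simp [triC, tri, abs_of_nonneg]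
    · intro n hn0
      have : r ≤ |(n:ℝ)| := by
        have : (1:ℝ) ≤ |(n:ℝ)| := by
          rw [← Int.cast_abs]
          exact_mod_cast Int.one_le_abs (by simpa using hn0)
        linarith
      simp [triC, tri_eq_zero hr this]
  -- summability of the shifted complex series
  have hsummC : Summable fun n : ℤ => fC r (x + n) := by
    set K : TopologicalSpace.Compacts ℝ := ⟨{x}, isCompact_singleton⟩
    have hbig := (isBigO_norm_restrict_cocompact (ContinuousMap.mk (fC r) hc)
      (by norm_num : (0:ℝ) < 2) (by simpa using fC_isBigO hr) K).comp_tendsto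
      Int.tendsto_coe_cofinite
    have h1 : Summable fun n : ℤ =>
        ‖((ContinuousMap.mk (fC r) hc).comp (ContinuousMap.addRight (n:ℝ))).restrict K‖ :=
      summable_of_isBigO (Real.summable_abs_int_rpow one_lt_two) hbig
    refine h1.of_norm_bounded fun n => ?_
    have hmem : x ∈ ({x} : Set ℝ) := rfl
    have := ContinuousMap.norm_coe_le_norm
      (((ContinuousMap.mk (fC r) hc).comp (ContinuousMap.addRight (n:ℝ))).restrict K) ⟨x, hmem⟩
    exact this
  have hsummR : Summable fun n : ℤ => r * sinc (t + B * n) ^ 2 := by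
    have := Complex.summable_ofReal.mp (by
      refine hsummC.congr fun n => ?_
      rw [fC, hBx n])
    exact this
  have htsum : (fun n : ℤ => fC r (x + n)) = fun n : ℤ => ((r * sinc (t + B * n) ^ 2 : ℝ) : ℂ) := by
    funext n
    rw [fC, hBx n]
  rw [htsum, hRHS] at hEq
  have hHS : HasSum (fun n : ℤ => ((r * sinc (t + B * n) ^ 2 : ℝ) : ℂ)) 1 := by
    rw [← hEq]
    exact (htsum ▸ hsummC).hasSum
  have hHSR : HasSum (fun n : ℤ => r * sinc (t + B * n) ^ 2) 1 := by
    have h1 := hsummR.hasSum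
    have h2 : HasSum (fun n : ℤ => ((r * sinc (t + B * n) ^ 2 : ℝ) : ℂ))
        ((∑' n : ℤ, r * sinc (t + B * n) ^ 2 : ℝ) : ℂ) := by
      exact Complex.hasSum_ofReal.mpr h1
    have := h2.unique hHS
    have h3 : (∑' n : ℤ, r * sinc (t + B * n) ^ 2 : ℝ) = 1 := by exact_mod_cast this
    rw [← h3]
    exact h1
  have hdiv := hHSR.div_const r
  have hfun : (fun n : ℤ => r * sinc (t + B * (n:ℤ)) ^ 2 / r) = fun n : ℤ => sinc (t + B * n) ^ 2 := by
    funext n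
    field_simp
  have hfin : HasSum (fun n : ℤ => sinc (t + B * n) ^ 2) (1 / r) := by
    rw [hfun] at hdiv
    exact hdiv
  have h1r : 1 / r = Real.pi / B := by
    rw [hrdef]
    field_simp
  rw [← h1r]
  exact hfin

noncomputable def pdfB (a : ℝ) (x : ℝ) : ℝ := a / (Real.pi * x) * sinc (a * Real.log x) ^ 2

lemma continuousOn_pdfB {a : ℝ} {s : Set ℝ} (hs : s ⊆ Set.Ioi 0) :
    ContinuousOn (pdfB a) s := by
  intro x hx
  have hx0 : 0 < x := hs hx
  have h1 : ContinuousAt (fun x : ℝ => a / (Real.pi * x)) x :=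
    continuousAt_const.div ((continuous_const.mul continuous_id).continuousAt)
      (by positivity)
  have h2 : ContinuousAt (fun x : ℝ => sinc (a * Real.log x) ^ 2) x := by
    have hlog : ContinuousAt (fun x : ℝ => a * Real.log x) x :=
      continuousAt_const.mul (Real.continuousAt_log hx0.ne')
    exact ((continuous_sinc.continuousAt.comp hlog).pow 2)
  exact (h1.mul h2).continuousWithinAt

lemma pdfB_nonneg {a : ℝ} (ha : 0 < a) {x : ℝ} (hx : 0 < x) : 0 ≤ pdfB a x := by
  rw [pdfB]
  positivity

lemma sub_interval {a : ℝ} (ha : 0 < a) {x₀ x₁ : ℝ} (h0 : 0 < x₀) (h01 : x₀ ≤ x₁) :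
    ∫⁻ x in Set.Icc x₀ x₁, ENNReal.ofReal (pdfB a x)
      = ENNReal.ofReal (∫ t in (a * Real.log x₀)..(a * Real.log x₁),
          (1 / Real.pi) * sinc t ^ 2) := by
  have hπ := Real.pi_pos
  have hsub : Set.Icc x₀ x₁ ⊆ Set.Ioi 0 := fun x hx => lt_of_lt_of_le h0 hx.1
  have hcont : ContinuousOn (pdfB a) (Set.Icc x₀ x₁) := continuousOn_pdfB hsub
  have hint : IntegrableOn (pdfB a) (Set.Icc x₀ x₁) :=
    hcont.integrableOn_compact isCompact_Icc
  have hnn : 0 ≤ᵐ[volume.restrict (Set.Icc x₀ x₁)] (pdfB a) := by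
    filter_upwards [ae_restrict_mem measurableSet_Icc] with x hx
    exact pdfB_nonneg ha (hsub hx)
  rw [← MeasureTheory.ofReal_integral_eq_lintegral_ofReal hint hnn]
  congr 1
  rw [MeasureTheory.integral_Icc_eq_integral_Ioc, ← intervalIntegral.integral_of_le h01]
  have hsubst := intervalIntegral.integral_comp_smul_deriv
    (f := fun x : ℝ => a * Real.log x) (f' := fun x : ℝ => a / x)
    (g := fun t : ℝ => (1 / Real.pi) * sinc t ^ 2)
    (a := x₀) (b := x₁)
    (fun x hx => by
      rw [Set.uIcc_of_le h01] at hx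
      have hx0 : x ≠ 0 := (lt_of_lt_of_le h0 hx.1).ne'
      have := (Real.hasDerivAt_log hx0).const_mul a
      simpa [div_eq_mul_inv] using this)
    (by
      rw [Set.uIcc_of_le h01]
      exact continuousOn_const.div continuousOn_id
        (fun x hx => (lt_of_lt_of_le h0 hx.1).ne'))
    (continuous_const.mul ((continuous_sinc.pow 2)))
  rw [← hsubst]
  refine intervalIntegral.integral_congr fun x hx => ?_
  rw [Set.uIcc_of_le h01] at hx
  have hx0 : x ≠ 0 := (lt_of_lt_of_le h0 hx.1).ne'
  show pdfB a x = (a / x) • ((1 / Real.pi) * sinc (a * Real.log x) ^ 2)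
  rw [smul_eq_mul, pdfB, mul_comm Real.pi x, ← div_div]
  ring

lemma master_sum {a : ℝ} (ha : 0 < a) (ha' : a < Real.pi / Real.log 10)
    (u c : ℝ) (hc : 0 ≤ c) :
    ∑' n : ℤ, ∫⁻ x in Set.Icc ((10:ℝ) ^ ((n:ℝ) + u)) ((10:ℝ) ^ ((n:ℝ) + u + c)),
        ENNReal.ofReal (pdfB a x)
      = ENNReal.ofReal c := by
  have hπ := Real.pi_pos
  have hL : 0 < Real.log 10 := Real.log_pos (by norm_num)
  set B : ℝ := a * Real.log 10 with hBdef
  have hB : 0 < B := by positivity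
  have hBπ : B < Real.pi := by
    rw [hBdef]
    calc a * Real.log 10 < (Real.pi / Real.log 10) * Real.log 10 := by
          exact mul_lt_mul_of_pos_right ha' hL
      _ = Real.pi := by field_simp
  have h10 : (0:ℝ) < 10 := by norm_num
  have hstep : ∀ n : ℤ, ∫⁻ x in Set.Icc ((10:ℝ) ^ ((n:ℝ) + u)) ((10:ℝ) ^ ((n:ℝ) + u + c)),
      ENNReal.ofReal (pdfB a x)
      = ∫⁻ s in Set.Ioc 0 (c * B),
          ENNReal.ofReal ((1 / Real.pi) * sinc ((u * B + s) + B * n) ^ 2) := by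
    intro n
    have hle : ((10:ℝ) ^ ((n:ℝ) + u)) ≤ (10:ℝ) ^ ((n:ℝ) + u + c) := by
      rw [Real.rpow_le_rpow_left_iff (by norm_num : (1:ℝ) < 10)]
      linarith
    rw [sub_interval ha (Real.rpow_pos_of_pos h10 _) hle]
    rw [Real.log_rpow h10, Real.log_rpow h10]
    have hb1 : a * (((n:ℝ) + u) * Real.log 10) = ((n:ℝ) + u) * B := by rw [hBdef]; ring
    have hb2 : a * (((n:ℝ) + u + c) * Real.log 10) = ((n:ℝ) + u) * B + c * B := by
      rw [hBdef]; ring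
    rw [hb1, hb2]
    have htrans := intervalIntegral.integral_comp_add_left
      (a := 0) (b := c * B) (fun t : ℝ => (1 / Real.pi) * sinc t ^ 2) (((n:ℝ) + u) * B)
    rw [add_zero] at htrans
    rw [← htrans]
    have hord : (0:ℝ) ≤ c * B := by positivity
    rw [intervalIntegral.integral_of_le hord]
    have hintOn : IntegrableOn (fun s : ℝ => (1 / Real.pi) * sinc ((((n:ℝ) + u) * B) + s) ^ 2)
        (Set.Ioc 0 (c * B)) := by
      refine Continuous.integrableOn_Ioc ?_
      exact continuous_const.mul (((continuous_sinc.comp (continuous_const.add continuous_id)).pow 2))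
    have hnn : 0 ≤ᵐ[volume.restrict (Set.Ioc 0 (c * B))]
        (fun s : ℝ => (1 / Real.pi) * sinc ((((n:ℝ) + u) * B) + s) ^ 2) := by
      refine Filter.Eventually.of_forall fun s => ?_
      positivity
    rw [MeasureTheory.ofReal_integral_eq_lintegral_ofReal hintOn hnn]
    refine MeasureTheory.setLIntegral_congr_fun_ae measurableSet_Ioc ?_
    refine Filter.Eventually.of_forall fun s _ => ?_
    congr 2
    ring
  calc ∑' n : ℤ, ∫⁻ x in Set.Icc ((10:ℝ) ^ ((n:ℝ) + u)) ((10:ℝ) ^ ((n:ℝ) + u + c)),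
        ENNReal.ofReal (pdfB a x)
      = ∑' n : ℤ, ∫⁻ s in Set.Ioc 0 (c * B),
          ENNReal.ofReal ((1 / Real.pi) * sinc ((u * B + s) + B * n) ^ 2) := by
        exact tsum_congr hstep
    _ = ∫⁻ s in Set.Ioc 0 (c * B),
          ∑' n : ℤ, ENNReal.ofReal ((1 / Real.pi) * sinc ((u * B + s) + B * n) ^ 2) := by
        rw [← MeasureTheory.lintegral_tsum]
        intro n
        refine (ENNReal.measurable_ofReal.comp ?_).aemeasurable
        have : Continuous fun s : ℝ => (1 / Real.pi) * sinc ((u * B + s) + B * (n:ℤ)) ^ 2 := by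
          refine continuous_const.mul ?_
          exact (continuous_sinc.comp ((continuous_const.add continuous_id).add continuous_const)).pow 2
        exact this.measurable
    _ = ∫⁻ s in Set.Ioc 0 (c * B), ENNReal.ofReal (1 / B) := by
        refine MeasureTheory.setLIntegral_congr_fun_ae measurableSet_Ioc ?_
        refine Filter.Eventually.of_forall fun s _ => ?_
        have hsum := (hasSum_sinc_sq hB hBπ (u * B + s)).mul_left (1 / Real.pi)
        have hval : (1 / Real.pi) * (Real.pi / B) = 1 / B := by field_simp
        rw [hval] at hsum
        rw [← hsum.tsum_eq]
        rw [← ENNReal.ofReal_tsum_of_nonneg (fun n => by positivity) hsum.summable]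
    _ = ENNReal.ofReal (1 / B) * volume (Set.Ioc 0 (c * B)) := by
        rw [MeasureTheory.setLIntegral_const]
    _ = ENNReal.ofReal c := by
        rw [Real.volume_Ioc, sub_zero, ← ENNReal.ofReal_mul (by positivity)]
        congr 1
        field_simp

lemma pairwise_disjoint_pieces {u c : ℝ} (hc1 : c < 1) :
    Pairwise (Function.onFun Disjoint
      (fun n : ℤ => Set.Icc ((10:ℝ) ^ ((n:ℝ) + u)) ((10:ℝ) ^ ((n:ℝ) + u + c)))) := by
  have key : ∀ m n : ℤ, m < n → ∀ x : ℝ,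
      x ∈ Set.Icc ((10:ℝ) ^ ((m:ℝ) + u)) ((10:ℝ) ^ ((m:ℝ) + u + c)) →
      x ∈ Set.Icc ((10:ℝ) ^ ((n:ℝ) + u)) ((10:ℝ) ^ ((n:ℝ) + u + c)) → False := by
    intro m n hmn x hxm hxn
    have hmn' : (m:ℝ) + 1 ≤ n := by exact_mod_cast Int.add_one_le_iff.mpr hmn
    have hlt : (10:ℝ) ^ ((m:ℝ) + u + c) < (10:ℝ) ^ ((n:ℝ) + u) := by
      rw [Real.rpow_lt_rpow_left_iff (by norm_num : (1:ℝ) < 10)]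
      linarith
    have := lt_of_le_of_lt hxm.2 (lt_of_lt_of_le hlt hxn.1)
    exact lt_irrefl x this
  intro m n hmn
  refine Set.disjoint_left.mpr fun x hxm hxn => ?_
  rcases hmn.lt_or_gt with h | h
  · exact key m n h x hxm hxn
  · exact key n m h x hxn hxm

lemma measure_Icc_union {a : ℝ} (ha : 0 < a) (ha' : a < Real.pi / Real.log 10)
    {u c : ℝ} (hc : 0 ≤ c) (hc1 : c < 1) :
    ∫⁻ x in ⋃ n : ℤ, Set.Icc ((10:ℝ) ^ ((n:ℝ) + u)) ((10:ℝ) ^ ((n:ℝ) + u + c)),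
        ENNReal.ofReal (pdfB a x) = ENNReal.ofReal c := by
  rw [MeasureTheory.lintegral_iUnion (fun n => measurableSet_Icc) (pairwise_disjoint_pieces hc1)]
  exact master_sum ha ha' u c hc

lemma measure_Ico_union {a : ℝ} (ha : 0 < a) (ha' : a < Real.pi / Real.log 10)
    {u c : ℝ} (hc : 0 ≤ c) (hc1 : c < 1) :
    ∫⁻ x in ⋃ n : ℤ, Set.Ico ((10:ℝ) ^ ((n:ℝ) + u)) ((10:ℝ) ^ ((n:ℝ) + u + c)),
        ENNReal.ofReal (pdfB a x) = ENNReal.ofReal c := by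
  have hsub : ∀ n : ℤ, Set.Ico ((10:ℝ) ^ ((n:ℝ) + u)) ((10:ℝ) ^ ((n:ℝ) + u + c))
      ⊆ Set.Icc ((10:ℝ) ^ ((n:ℝ) + u)) ((10:ℝ) ^ ((n:ℝ) + u + c)) := fun n => Set.Ico_subset_Icc_self
  rw [MeasureTheory.lintegral_iUnion (fun n => measurableSet_Ico)
    (fun m n hmn => ((pairwise_disjoint_pieces hc1 hmn).mono (hsub m) (hsub n)))]
  calc ∑' n : ℤ, ∫⁻ x in Set.Ico ((10:ℝ) ^ ((n:ℝ) + u)) ((10:ℝ) ^ ((n:ℝ) + u + c)),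
        ENNReal.ofReal (pdfB a x)
      = ∑' n : ℤ, ∫⁻ x in Set.Icc ((10:ℝ) ^ ((n:ℝ) + u)) ((10:ℝ) ^ ((n:ℝ) + u + c)),
        ENNReal.ofReal (pdfB a x) := by
        refine tsum_congr fun n => ?_
        exact MeasureTheory.setLIntegral_congr Ico_ae_eq_Icc
    _ = ENNReal.ofReal c := master_sum ha ha' u c hc

lemma mem_union_Icc {u c : ℝ} (hu : 0 ≤ u) (hc : 0 ≤ c) (huc : u + c < 1) {x : ℝ} (hx : 0 < x) :
    (x ∈ ⋃ n : ℤ, Set.Icc ((10:ℝ) ^ ((n:ℝ) + u)) ((10:ℝ) ^ ((n:ℝ) + u + c))) ↔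
      (u ≤ Int.fract (Real.logb 10 x) ∧ Int.fract (Real.logb 10 x) ≤ u + c) := by
  have h110 : (1:ℝ) < 10 := by norm_num
  set y : ℝ := Real.logb 10 x with hy
  have hxy : x = (10:ℝ) ^ y := (Real.rpow_logb (by norm_num) (by norm_num) hx).symm
  constructor
  · intro hmem
    obtain ⟨n, hn⟩ := Set.mem_iUnion.mp hmem
    rw [hxy, Set.mem_Icc, Real.rpow_le_rpow_left_iff h110, Real.rpow_le_rpow_left_iff h110] at hn
    have hfl : ⌊y⌋ = n := by
      rw [Int.floor_eq_iff]
      constructor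
      · linarith [hn.1]
      · push_cast
        linarith [hn.2]
    rw [Int.fract, hfl]
    constructor <;> [linarith [hn.1]; linarith [hn.2]]
  · intro ⟨h1, h2⟩
    refine Set.mem_iUnion.mpr ⟨⌊y⌋, ?_⟩
    rw [Int.fract] at h1 h2
    rw [hxy, Set.mem_Icc, Real.rpow_le_rpow_left_iff h110, Real.rpow_le_rpow_left_iff h110]
    constructor <;> [linarith; linarith]

lemma mem_union_Ico {u c : ℝ} (hu : 0 ≤ u) (hc : 0 ≤ c) (huc : u + c ≤ 1) {x : ℝ} (hx : 0 < x) :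
    (x ∈ ⋃ n : ℤ, Set.Ico ((10:ℝ) ^ ((n:ℝ) + u)) ((10:ℝ) ^ ((n:ℝ) + u + c))) ↔
      (u ≤ Int.fract (Real.logb 10 x) ∧ Int.fract (Real.logb 10 x) < u + c) := by
  have h110 : (1:ℝ) < 10 := by norm_num
  set y : ℝ := Real.logb 10 x with hy
  have hxy : x = (10:ℝ) ^ y := (Real.rpow_logb (by norm_num) (by norm_num) hx).symm
  constructor
  · intro hmem
    obtain ⟨n, hn⟩ := Set.mem_iUnion.mp hmem
    rw [hxy, Set.mem_Ico, Real.rpow_le_rpow_left_iff h110, Real.rpow_lt_rpow_left_iff h110] at hn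
    have hfl : ⌊y⌋ = n := by
      rw [Int.floor_eq_iff]
      constructor
      · linarith [hn.1]
      · push_cast
        linarith [hn.2]
    rw [Int.fract, hfl]
    constructor <;> [linarith [hn.1]; linarith [hn.2]]
  · intro ⟨h1, h2⟩
    refine Set.mem_iUnion.mpr ⟨⌊y⌋, ?_⟩
    rw [Int.fract] at h1 h2
    rw [hxy, Set.mem_Ico, Real.rpow_le_rpow_left_iff h110, Real.rpow_lt_rpow_left_iff h110]
    constructor <;> [linarith; linarith]

lemma measurable_ten_fract_logb :
    Measurable (fun x : ℝ => (10:ℝ) ^ Int.fract (Real.logb 10 x)) := by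
  have h1 : Measurable (Real.logb 10) := by
    have : Real.logb 10 = fun x => Real.log x / Real.log 10 := funext fun x => rfl
    rw [this]
    exact Real.measurable_log.div_const _
  have h2 : Continuous (fun y : ℝ => (10:ℝ) ^ y) := by
    have : (fun y : ℝ => (10:ℝ) ^ y) = fun y => Real.exp (Real.log 10 * y) :=
      funext fun y => Real.rpow_def_of_pos (by norm_num) y
    rw [this]
    exact Real.continuous_exp.comp (continuous_const.mul continuous_id)
  exact h2.measurable.comp (measurable_fract.comp h1)

/-- If `X` has density `P_X(x) = (a/(π x)) sinc²(a ln x)` with `0 < a < π/ln 10`, then `X`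
satisfies the strong Benford law in base 10, and its leading decimal digit `d` has
probability `log₁₀(1 + 1/d)` for each `d ∈ {1,…,9}`. -/
theorem sinc_sq_density_benford_base_ten
    (a : ℝ) (ha : 0 < a) (ha' : a < Real.pi / Real.log 10)
    {Ω : Type*} [MeasurableSpace Ω] (μ : Measure Ω) [IsProbabilityMeasure μ]
    (X : Ω → ℝ) (hXm : Measurable X) (hXpos : ∀ ω, 0 < X ω)
    (hd : μ.map X = volume.withDensity (fun x => ENNReal.ofReal
        (Set.indicator (Set.Ioi 0)
          (fun x => a / (Real.pi * x) * sinc (a * Real.log x) ^ 2) x))) :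
    (∀ s ∈ Set.Ico (1 : ℝ) 10,
      μ {ω | 1 ≤ (10 : ℝ) ^ Int.fract (Real.logb 10 (X ω)) ∧
             (10 : ℝ) ^ Int.fract (Real.logb 10 (X ω)) ≤ s}
        = ENNReal.ofReal (Real.logb 10 s)) ∧
    (∀ d : ℕ, 1 ≤ d → d ≤ 9 →
      μ {ω | (d : ℝ) ≤ (10 : ℝ) ^ Int.fract (Real.logb 10 (X ω)) ∧
             (10 : ℝ) ^ Int.fract (Real.logb 10 (X ω)) < (d : ℝ) + 1}
        = ENNReal.ofReal (Real.logb 10 (1 + 1 / (d : ℝ)))) := by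
  have h110 : (1:ℝ) < 10 := by norm_num
  have hdens : ∀ S : Set ℝ, MeasurableSet S → S ⊆ Set.Ioi 0 →
      μ.map X S = ∫⁻ x in S, ENNReal.ofReal (pdfB a x) := by
    intro S hS hSsub
    rw [hd, withDensity_apply _ hS]
    refine MeasureTheory.setLIntegral_congr_fun_ae hS (Filter.Eventually.of_forall fun x hx => ?_)
    rw [Set.indicator_of_mem (hSsub hx)]
    rfl
  have hnull : μ.map X (Set.Iic 0) = 0 := by
    rw [hd, withDensity_apply _ measurableSet_Iic]
    have h0 : ∀ x ∈ Set.Iic (0:ℝ), ENNReal.ofReal (Set.indicator (Set.Ioi 0)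
        (fun x => a / (Real.pi * x) * sinc (a * Real.log x) ^ 2) x) = (0 : ENNReal) := by
      intro x hx
      rw [Set.indicator_of_notMem (by simpa using hx)]
      simp
    rw [MeasureTheory.setLIntegral_congr_fun_ae measurableSet_Iic
      (Filter.Eventually.of_forall h0)]
    simp
  have hcompl : μ.map X (Set.Ioi (0:ℝ))ᶜ = 0 := by rw [Set.compl_Ioi]; exact hnull
  have hUsub : ∀ u c : ℝ, (⋃ n : ℤ, Set.Icc ((10:ℝ) ^ ((n:ℝ) + u)) ((10:ℝ) ^ ((n:ℝ) + u + c)))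
      ⊆ Set.Ioi 0 := by
    intro u c
    refine Set.iUnion_subset fun n x hx => ?_
    exact lt_of_lt_of_le (Real.rpow_pos_of_pos (by norm_num) _) hx.1
  have hUsub' : ∀ u c : ℝ, (⋃ n : ℤ, Set.Ico ((10:ℝ) ^ ((n:ℝ) + u)) ((10:ℝ) ^ ((n:ℝ) + u + c)))
      ⊆ Set.Ioi 0 := by
    intro u c
    refine Set.iUnion_subset fun n x hx => ?_
    exact lt_of_lt_of_le (Real.rpow_pos_of_pos (by norm_num) _) hx.1
  constructor
  · -- strong Benford law
    intro s hs
    obtain ⟨hs1, hs10⟩ := hs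
    have hs0 : (0:ℝ) < s := lt_of_lt_of_le one_pos hs1
    set v : ℝ := Real.logb 10 s with hv
    have hv0 : 0 ≤ v := Real.logb_nonneg h110 hs1
    have hv1 : v < 1 := by
      have h1 := Real.logb_lt_logb (b := 10) h110 hs0 hs10
      rwa [Real.logb_self_eq_one h110] at h1
    have hTmeas : MeasurableSet {x : ℝ | 1 ≤ (10:ℝ) ^ Int.fract (Real.logb 10 x) ∧
        (10:ℝ) ^ Int.fract (Real.logb 10 x) ≤ s} := by
      have : {x : ℝ | 1 ≤ (10:ℝ) ^ Int.fract (Real.logb 10 x) ∧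
          (10:ℝ) ^ Int.fract (Real.logb 10 x) ≤ s}
          = (fun x : ℝ => (10:ℝ) ^ Int.fract (Real.logb 10 x)) ⁻¹' (Set.Icc 1 s) := rfl
      rw [this]
      exact measurable_ten_fract_logb measurableSet_Icc
    have hpre : {ω | 1 ≤ (10 : ℝ) ^ Int.fract (Real.logb 10 (X ω)) ∧
             (10 : ℝ) ^ Int.fract (Real.logb 10 (X ω)) ≤ s}
        = X ⁻¹' {x : ℝ | 1 ≤ (10:ℝ) ^ Int.fract (Real.logb 10 x) ∧
            (10:ℝ) ^ Int.fract (Real.logb 10 x) ≤ s} := rfl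
    rw [hpre, ← Measure.map_apply hXm hTmeas, ← measure_inter_conull hcompl]
    have hTeq : {x : ℝ | 1 ≤ (10:ℝ) ^ Int.fract (Real.logb 10 x) ∧
        (10:ℝ) ^ Int.fract (Real.logb 10 x) ≤ s} ∩ Set.Ioi 0
        = ⋃ n : ℤ, Set.Icc ((10:ℝ) ^ ((n:ℝ) + 0)) ((10:ℝ) ^ ((n:ℝ) + 0 + v)) := by
      ext x
      simp only [Set.mem_inter_iff, Set.mem_setOf_eq, Set.mem_Ioi]
      constructor
      · rintro ⟨⟨h1, h2⟩, hx0⟩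
        rw [mem_union_Icc le_rfl hv0 (by linarith) hx0]
        refine ⟨Int.fract_nonneg _, ?_⟩
        rw [zero_add]
        have hx' : (10:ℝ) ^ Int.fract (Real.logb 10 x) ≤ (10:ℝ) ^ v := by
          rw [hv, Real.rpow_logb (by norm_num) (by norm_num) hs0]
          exact h2
        exact (Real.rpow_le_rpow_left_iff h110).mp hx'
      · intro hmem
        have hx0 : 0 < x := hUsub 0 v hmem
        rw [mem_union_Icc le_rfl hv0 (by linarith) hx0] at hmem
        obtain ⟨h1, h2⟩ := hmem
        rw [zero_add] at h2
        refine ⟨⟨?_, ?_⟩, hx0⟩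
        · calc (1:ℝ) = (10:ℝ) ^ (0:ℝ) := (Real.rpow_zero 10).symm
            _ ≤ _ := by
              rw [Real.rpow_le_rpow_left_iff h110]
              exact Int.fract_nonneg _
        · have hstep : (10:ℝ) ^ Int.fract (Real.logb 10 x) ≤ (10:ℝ) ^ v := by
            rw [Real.rpow_le_rpow_left_iff h110]
            exact h2
          calc (10:ℝ) ^ Int.fract (Real.logb 10 x) ≤ (10:ℝ) ^ v := hstep
            _ = s := Real.rpow_logb (by norm_num) (by norm_num) hs0
    rw [hTeq, hdens _ (MeasurableSet.iUnion fun n => measurableSet_Icc) (hUsub 0 v)]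
    exact measure_Icc_union ha ha' hv0 hv1
  · -- leading digit law
    intro d hd1 hd9
    have hd1' : (1:ℝ) ≤ (d:ℝ) := by exact_mod_cast hd1
    have hd9' : (d:ℝ) ≤ 9 := by exact_mod_cast hd9
    have hd0 : (0:ℝ) < d := by linarith
    set u : ℝ := Real.logb 10 (d:ℝ) with hu
    set c : ℝ := Real.logb 10 (1 + 1/(d:ℝ)) with hc
    have hinv : (0:ℝ) < 1/(d:ℝ) := by positivity
    have hu0 : 0 ≤ u := Real.logb_nonneg h110 hd1'
    have hc0 : 0 ≤ c := Real.logb_nonneg h110 (by linarith)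
    have hc1 : c < 1 := by
      have h2 : (1:ℝ) + 1/d < 10 := by
        have : (1:ℝ)/d ≤ 1 := by rw [div_le_one hd0]; linarith
        linarith
      have h3 := Real.logb_lt_logb (b := 10) h110 (by linarith) h2
      rwa [Real.logb_self_eq_one h110] at h3
    have huc : u + c = Real.logb 10 ((d:ℝ) + 1) := by
      rw [hu, hc, ← Real.logb_mul (ne_of_gt hd0) (by positivity)]
      congr 1
      field_simp
    have huc1 : u + c ≤ 1 := by
      rw [huc]
      have h2 : (d:ℝ) + 1 ≤ 10 := by linarith
      have h3 := Real.logb_le_logb_of_le (b := 10) h110 (by linarith) h2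
      rwa [Real.logb_self_eq_one h110] at h3
    have hTmeas : MeasurableSet {x : ℝ | (d:ℝ) ≤ (10:ℝ) ^ Int.fract (Real.logb 10 x) ∧
        (10:ℝ) ^ Int.fract (Real.logb 10 x) < (d:ℝ) + 1} := by
      have : {x : ℝ | (d:ℝ) ≤ (10:ℝ) ^ Int.fract (Real.logb 10 x) ∧
          (10:ℝ) ^ Int.fract (Real.logb 10 x) < (d:ℝ) + 1}
          = (fun x : ℝ => (10:ℝ) ^ Int.fract (Real.logb 10 x)) ⁻¹' (Set.Ico (d:ℝ) ((d:ℝ)+1)) := rfl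
      rw [this]
      exact measurable_ten_fract_logb measurableSet_Ico
    have hpre : {ω | (d : ℝ) ≤ (10 : ℝ) ^ Int.fract (Real.logb 10 (X ω)) ∧
             (10 : ℝ) ^ Int.fract (Real.logb 10 (X ω)) < (d : ℝ) + 1}
        = X ⁻¹' {x : ℝ | (d:ℝ) ≤ (10:ℝ) ^ Int.fract (Real.logb 10 x) ∧
            (10:ℝ) ^ Int.fract (Real.logb 10 x) < (d:ℝ) + 1} := rfl
    rw [hpre, ← Measure.map_apply hXm hTmeas, ← measure_inter_conull hcompl]
    have hTeq : {x : ℝ | (d:ℝ) ≤ (10:ℝ) ^ Int.fract (Real.logb 10 x) ∧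
        (10:ℝ) ^ Int.fract (Real.logb 10 x) < (d:ℝ) + 1} ∩ Set.Ioi 0
        = ⋃ n : ℤ, Set.Ico ((10:ℝ) ^ ((n:ℝ) + u)) ((10:ℝ) ^ ((n:ℝ) + u + c)) := by
      ext x
      simp only [Set.mem_inter_iff, Set.mem_setOf_eq, Set.mem_Ioi]
      have hdu : (10:ℝ) ^ u = (d:ℝ) := Real.rpow_logb (by norm_num) (by norm_num) hd0
      have hduc : (10:ℝ) ^ (u + c) = (d:ℝ) + 1 := by
        rw [huc]
        exact Real.rpow_logb (by norm_num) (by norm_num) (by linarith)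
      constructor
      · rintro ⟨⟨h1, h2⟩, hx0⟩
        rw [mem_union_Ico hu0 hc0 huc1 hx0]
        constructor
        · rw [← Real.rpow_le_rpow_left_iff h110, hdu]
          exact h1
        · rw [← Real.rpow_lt_rpow_left_iff h110, hduc]
          exact h2
      · intro hmem
        have hx0 : 0 < x := hUsub' u c hmem
        rw [mem_union_Ico hu0 hc0 huc1 hx0] at hmem
        obtain ⟨h1, h2⟩ := hmem
        refine ⟨⟨?_, ?_⟩, hx0⟩
        · rw [← hdu]
          rw [Real.rpow_le_rpow_left_iff h110]
          exact h1
        · rw [← hduc]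
          rw [Real.rpow_lt_rpow_left_iff h110]
          exact h2
    rw [hTeq, hdens _ (MeasurableSet.iUnion fun n => measurableSet_Ico) (hUsub' u c)]
    exact measure_Ico_union ha ha' hc0 hc1
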